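/- Let C be an abelian category, and consider a 3×3 commutative diagram with objects X_{j,k} (0 ≤ j,k ≤ 2) whose every row and every column is a short exact sequence. With C_i = ⊕_{j+k=i} X_{j,k} and differentials d_i given on the summand X_{j,k} by d^h_{j,k} + (-1)^{j+k} d^v_{j,k}, the resulting five-term complex 0 → C_0 → C_1 → C_2 → C_3 → C_4 → 0 is exact (i.e. it is an acyclic complex). -/
import Mathlib


open CategoryTheory Limits

private lemma comp_biprod_desc {C : Type*} [Category C] [Preadditive C] [HasBinaryBiproducts C]
    {X Y Z T : C} (t : T ⟶ X ⊞ Y) (f : X ⟶ Z) (g : Y ⟶ Z) :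
    t ≫ biprod.desc f g = t ≫ biprod.fst ≫ f + t ≫ biprod.snd ≫ g := by
  have h : t = biprod.lift (t ≫ biprod.fst) (t ≫ biprod.snd) := by ext <;> simp
  conv_lhs => rw [h]
  simp [biprod.lift_desc, Category.assoc]


/-- Given a 3×3 commutative diagram in an abelian category whose
rows and columns are short exact sequences, the totalization
`0 → C_0 → C_1 → C_2 → C_3 → C_4 → 0` (with `C_i = ⊞_{j+k=i} X_{j,k}` and
differentials `d^h_{j,k} + (-1)^{j+k} d^v_{j,k}` on the summand `X_{j,k}`)
is an exact (acyclic) complex: `d_0` is mono, `d_3` is epi, and the complex is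
exact at `C_1`, `C_2` and `C_3`. -/
theorem total_complex_of_nine_diagram_is_exact
    {C : Type*} [Category C] [Abelian C]
    {X00 X01 X02 X10 X11 X12 X20 X21 X22 : C}
    (h00 : X00 ⟶ X01) (h01 : X01 ⟶ X02)
    (h10 : X10 ⟶ X11) (h11 : X11 ⟶ X12)
    (h20 : X20 ⟶ X21) (h21 : X21 ⟶ X22)
    (v00 : X00 ⟶ X10) (v10 : X10 ⟶ X20)
    (v01 : X01 ⟶ X11) (v11 : X11 ⟶ X21)
    (v02 : X02 ⟶ X12) (v12 : X12 ⟶ X22)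
    (sq00 : h00 ≫ v01 = v00 ≫ h10) (sq01 : h01 ≫ v02 = v01 ≫ h11)
    (sq10 : h10 ≫ v11 = v10 ≫ h20) (sq11 : h11 ≫ v12 = v11 ≫ h21)
    (wr0 : h00 ≫ h01 = 0) (wr1 : h10 ≫ h11 = 0) (wr2 : h20 ≫ h21 = 0)
    (wc0 : v00 ≫ v10 = 0) (wc1 : v01 ≫ v11 = 0) (wc2 : v02 ≫ v12 = 0)
    (hrow0 : (ShortComplex.mk h00 h01 wr0).ShortExact)
    (hrow1 : (ShortComplex.mk h10 h11 wr1).ShortExact)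
    (hrow2 : (ShortComplex.mk h20 h21 wr2).ShortExact)
    (hcol0 : (ShortComplex.mk v00 v10 wc0).ShortExact)
    (hcol1 : (ShortComplex.mk v01 v11 wc1).ShortExact)
    (hcol2 : (ShortComplex.mk v02 v12 wc2).ShortExact) :
    ∃ (w01 : (biprod.lift h00 v00) ≫
        (biprod.desc (biprod.lift h01 (biprod.lift (-v01) 0))
          (biprod.lift 0 (biprod.lift h10 (-v10)))) = 0)
      (w12 : (biprod.desc (biprod.lift h01 (biprod.lift (-v01) 0))
          (biprod.lift 0 (biprod.lift h10 (-v10)))) ≫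
        (biprod.desc (biprod.lift v02 (0 : X02 ⟶ X21))
          (biprod.desc (biprod.lift h11 v11) (biprod.lift (0 : X20 ⟶ X12) h20))) = 0)
      (w23 : (biprod.desc (biprod.lift v02 (0 : X02 ⟶ X21))
          (biprod.desc (biprod.lift h11 v11) (biprod.lift (0 : X20 ⟶ X12) h20))) ≫
        (biprod.desc (-v12) h21) = 0),
      Mono (biprod.lift h00 v00) ∧
      Epi (biprod.desc (-v12) h21) ∧
      (ShortComplex.mk _ _ w01).Exact ∧
      (ShortComplex.mk _ _ w12).Exact ∧
      (ShortComplex.mk _ _ w23).Exact := by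
  have mono_h00 : Mono h00 := hrow0.mono_f
  have mono_h10 : Mono h10 := hrow1.mono_f
  have mono_h20 : Mono h20 := hrow2.mono_f
  have epi_h01 : Epi h01 := hrow0.epi_g
  have epi_h21 : Epi h21 := hrow2.epi_g
  have epi_v11 : Epi v11 := hcol1.epi_g
  have w01 : (biprod.lift h00 v00) ≫
      (biprod.desc (biprod.lift h01 (biprod.lift (-v01) 0))
        (biprod.lift 0 (biprod.lift h10 (-v10)))) = 0 := by
    ext <;> simp [sq00, wr0, wc0]
  have w12 : (biprod.desc (biprod.lift h01 (biprod.lift (-v01) 0))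
        (biprod.lift 0 (biprod.lift h10 (-v10)))) ≫
      (biprod.desc (biprod.lift v02 (0 : X02 ⟶ X21))
        (biprod.desc (biprod.lift h11 v11) (biprod.lift (0 : X20 ⟶ X12) h20))) = 0 := by
    ext <;> simp [sq01, sq10, wr1, wc1]
  have w23 : (biprod.desc (biprod.lift v02 (0 : X02 ⟶ X21))
        (biprod.desc (biprod.lift h11 v11) (biprod.lift (0 : X20 ⟶ X12) h20))) ≫
      (biprod.desc (-v12) h21) = 0 := by
    ext <;> simp [sq11, wr2, wc2]
  refine ⟨w01, w12, w23, ?_, ?_, ?_, ?_, ?_⟩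
  · exact mono_of_mono_fac (show (biprod.lift h00 v00) ≫ biprod.fst = h00 by simp)
  · exact epi_of_epi_fac (show biprod.inr ≫ (biprod.desc (-v12) h21) = h21 by simp)
  · -- exactness at C1
    rw [ShortComplex.exact_iff_exact_up_to_refinements]
    intro T t ht
    dsimp at t ht ⊢
    rw [comp_biprod_desc] at ht
    have hx : (t ≫ biprod.fst) ≫ h01 = 0 := by
      have := congrArg (· ≫ (biprod.fst : X02 ⊞ (X11 ⊞ X20) ⟶ X02)) ht
      simpa [Preadditive.add_comp, Category.assoc] using this
    have hmix : t ≫ biprod.fst ≫ v01 = t ≫ biprod.snd ≫ h10 := by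
      have := congrArg (· ≫ (biprod.snd ≫ biprod.fst : X02 ⊞ (X11 ⊞ X20) ⟶ X11)) ht
      simp at this
      exact neg_add_eq_zero.mp this
    obtain ⟨T', e, he, u, hu⟩ := hrow0.exact.exact_up_to_refinements (t ≫ biprod.fst) hx
    dsimp at u hu
    have key : u ≫ v00 = e ≫ t ≫ biprod.snd := by
      rw [← cancel_mono h10]
      calc (u ≫ v00) ≫ h10 = u ≫ h00 ≫ v01 := by rw [Category.assoc, ← sq00]
        _ = (u ≫ h00) ≫ v01 := by rw [Category.assoc]
        _ = (e ≫ (t ≫ biprod.fst)) ≫ v01 := by rw [hu]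
        _ = e ≫ t ≫ biprod.fst ≫ v01 := by simp [Category.assoc]
        _ = e ≫ t ≫ biprod.snd ≫ h10 := by rw [hmix]
        _ = (e ≫ t ≫ biprod.snd) ≫ h10 := by simp [Category.assoc]
    refine ⟨T', e, he, u, ?_⟩
    ext
    · simpa [Category.assoc] using hu
    · simpa [Category.assoc] using key.symm
  · -- exactness at C2
    rw [ShortComplex.exact_iff_exact_up_to_refinements]
    intro T t ht
    dsimp at t ht ⊢
    rw [comp_biprod_desc] at ht
    rw [show t ≫ biprod.snd ≫ biprod.desc (biprod.lift h11 v11) (biprod.lift (0 : X20 ⟶ X12) h20)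
        = (t ≫ biprod.snd) ≫ biprod.desc (biprod.lift h11 v11) (biprod.lift (0 : X20 ⟶ X12) h20)
        from by simp [Category.assoc]] at ht
    rw [comp_biprod_desc (t ≫ biprod.snd)] at ht
    have eq1 : t ≫ biprod.fst ≫ v02 + t ≫ biprod.snd ≫ biprod.fst ≫ h11 = 0 := by
      have := congrArg (· ≫ (biprod.fst : X12 ⊞ X21 ⟶ X12)) ht
      simpa using this
    have eq2 : t ≫ biprod.snd ≫ biprod.fst ≫ v11 + t ≫ biprod.snd ≫ biprod.snd ≫ h20 = 0 := by
      have := congrArg (· ≫ (biprod.snd : X12 ⊞ X21 ⟶ X21)) ht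
      simpa using this
    obtain ⟨T', e, he, x, hx⟩ := surjective_up_to_refinements_of_epi h01 (t ≫ biprod.fst)
    have hb' : (e ≫ t ≫ biprod.snd ≫ biprod.fst + x ≫ v01) ≫ h11 = 0 := by
      rw [Preadditive.add_comp]
      have s1 : (x ≫ v01) ≫ h11 = e ≫ t ≫ biprod.fst ≫ v02 := by
        calc (x ≫ v01) ≫ h11 = x ≫ v01 ≫ h11 := by rw [Category.assoc]
          _ = x ≫ h01 ≫ v02 := by rw [sq01]
          _ = (x ≫ h01) ≫ v02 := by rw [Category.assoc]
          _ = (e ≫ (t ≫ biprod.fst)) ≫ v02 := by rw [hx]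
          _ = e ≫ t ≫ biprod.fst ≫ v02 := by simp [Category.assoc]
      rw [s1]
      have s2 : (e ≫ t ≫ biprod.snd ≫ biprod.fst) ≫ h11 + e ≫ t ≫ biprod.fst ≫ v02
          = e ≫ (t ≫ biprod.fst ≫ v02 + t ≫ biprod.snd ≫ biprod.fst ≫ h11) := by
        rw [Preadditive.comp_add]
        simp only [Category.assoc]
        abel
      rw [s2, eq1, comp_zero]
    obtain ⟨T'', e', he', y, hy⟩ := hrow1.exact.exact_up_to_refinements
      (e ≫ t ≫ biprod.snd ≫ biprod.fst + x ≫ v01) hb'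
    dsimp at y hy
    have hy' : e' ≫ e ≫ t ≫ biprod.snd ≫ biprod.fst + e' ≫ x ≫ v01 = y ≫ h10 := by
      rw [← hy, Preadditive.comp_add]
    have hcc : e' ≫ e ≫ t ≫ biprod.snd ≫ biprod.snd = -(y ≫ v10) := by
      rw [← cancel_mono h20]
      have s1 : (-(y ≫ v10)) ≫ h20 = -(y ≫ h10 ≫ v11) := by
        rw [Preadditive.neg_comp, Category.assoc, sq10]
      rw [s1, show y ≫ h10 ≫ v11 = (y ≫ h10) ≫ v11 from by rw [Category.assoc], ← hy',
        Preadditive.add_comp,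
        show (e' ≫ x ≫ v01) ≫ v11 = 0 from by simp [Category.assoc, wc1], add_zero,
        eq_neg_iff_add_eq_zero]
      have s2 : (e' ≫ e ≫ t ≫ biprod.snd ≫ biprod.snd) ≫ h20
            + (e' ≫ e ≫ t ≫ biprod.snd ≫ biprod.fst) ≫ v11
          = e' ≫ e ≫ (t ≫ biprod.snd ≫ biprod.fst ≫ v11
            + t ≫ biprod.snd ≫ biprod.snd ≫ h20) := by
        rw [Preadditive.comp_add, Preadditive.comp_add]
        simp only [Category.assoc]
        abel
      rw [s2, eq2, comp_zero, comp_zero]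
    refine ⟨T'', e' ≫ e, epi_comp _ _, biprod.lift (e' ≫ x) y, ?_⟩
    ext
    · show ((e' ≫ e) ≫ t) ≫ biprod.fst = _
      have lhs : ((e' ≫ e) ≫ t) ≫ biprod.fst = e' ≫ (e ≫ (t ≫ biprod.fst)) := by
        simp [Category.assoc]
      rw [lhs, hx]
      simp [biprod.lift_desc, Preadditive.add_comp, Category.assoc]
    · show (((e' ≫ e) ≫ t) ≫ biprod.snd) ≫ biprod.fst = _
      have lhs : (((e' ≫ e) ≫ t) ≫ biprod.snd) ≫ biprod.fst
          = e' ≫ e ≫ t ≫ biprod.snd ≫ biprod.fst := by simp [Category.assoc]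
      rw [lhs, show e' ≫ e ≫ t ≫ biprod.snd ≫ biprod.fst
          = -(e' ≫ x ≫ v01) + y ≫ h10 from by rw [← hy']; abel]
      simp [biprod.lift_desc, Preadditive.add_comp, Category.assoc]
    · show (((e' ≫ e) ≫ t) ≫ biprod.snd) ≫ biprod.snd = _
      have lhs : (((e' ≫ e) ≫ t) ≫ biprod.snd) ≫ biprod.snd
          = e' ≫ e ≫ t ≫ biprod.snd ≫ biprod.snd := by simp [Category.assoc]
      rw [lhs, hcc]
      simp [biprod.lift_desc, Preadditive.add_comp, Category.assoc]
  · -- exactness at C3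
    rw [ShortComplex.exact_iff_exact_up_to_refinements]
    intro T t ht
    dsimp at t ht ⊢
    rw [comp_biprod_desc] at ht
    have eq0 : t ≫ biprod.fst ≫ v12 = t ≫ biprod.snd ≫ h21 := by
      simp at ht
      exact neg_add_eq_zero.mp ht
    obtain ⟨T', e, he, y, hy⟩ := surjective_up_to_refinements_of_epi v11 (t ≫ biprod.snd)
    have hres : (e ≫ t ≫ biprod.fst - y ≫ h11) ≫ v12 = 0 := by
      rw [Preadditive.sub_comp, sub_eq_zero]
      calc (e ≫ t ≫ biprod.fst) ≫ v12 = e ≫ t ≫ biprod.fst ≫ v12 := by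
            simp [Category.assoc]
        _ = e ≫ t ≫ biprod.snd ≫ h21 := by rw [eq0]
        _ = (e ≫ (t ≫ biprod.snd)) ≫ h21 := by simp [Category.assoc]
        _ = (y ≫ v11) ≫ h21 := by rw [hy]
        _ = y ≫ h11 ≫ v12 := by rw [Category.assoc, sq11]
        _ = (y ≫ h11) ≫ v12 := by rw [Category.assoc]
    obtain ⟨T'', e', he', x, hx⟩ := hcol2.exact.exact_up_to_refinements
      (e ≫ t ≫ biprod.fst - y ≫ h11) hres
    dsimp at x hx
    have hx' : e' ≫ e ≫ t ≫ biprod.fst = x ≫ v02 + e' ≫ y ≫ h11 := by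
      rw [← hx, Preadditive.comp_sub]
      abel
    refine ⟨T'', e' ≫ e, epi_comp _ _, biprod.lift x (biprod.lift (e' ≫ y) 0), ?_⟩
    ext
    · show ((e' ≫ e) ≫ t) ≫ biprod.fst = _
      have lhs : ((e' ≫ e) ≫ t) ≫ biprod.fst = e' ≫ e ≫ t ≫ biprod.fst := by
        simp [Category.assoc]
      rw [lhs, hx']
      simp [biprod.lift_desc, Preadditive.add_comp, Category.assoc]
    · show ((e' ≫ e) ≫ t) ≫ biprod.snd = _
      have lhs : ((e' ≫ e) ≫ t) ≫ biprod.snd = e' ≫ (e ≫ (t ≫ biprod.snd)) := by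
        simp [Category.assoc]
      rw [lhs, hy]
      simp [biprod.lift_desc, Preadditive.add_comp, Category.assoc]
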